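/- For every real t > 1, 1 + t⁻² − arccosh(t)/(t·√(t² − 1)) − t^(−2/3) > 0. -/

import Mathlib

/-!
Write `v = t⁻²`. By AM–GM, `t^(-2/3) = (v · 1 · 1)^(1/3) ≤ (v + 2) / 3`, so it suffices that
`arccosh t / (t √(t² - 1)) < (1 + 2v) / 3`, i.e. `arccosh t < √(t² - 1) (t² + 2) / (3t)`.
Both sides vanish at `t = 1`, and the derivative of their difference is
`2 (t² - 1)² / (3 t² √(t² - 1)) > 0`.
-/

open Real

noncomputable def arccosh (t : ℝ) : ℝ := Real.log (t + Real.sqrt (t ^ 2 - 1))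

open Set

lemma arccosh_eq_arcosh : arccosh = Real.arcosh := rfl

lemma rpow_one_div_three_le {x : ℝ} (hx : 0 ≤ x) : x ^ (1 / 3 : ℝ) ≤ (x + 2) / 3 := by
  have h := geom_mean_le_arith_mean3_weighted (w₁ := 1 / 3) (w₂ := 1 / 3) (w₃ := 1 / 3)
    (p₂ := 1) (p₃ := 1) (by norm_num) (by norm_num) (by norm_num) hx zero_le_one zero_le_one
    (by norm_num)
  rw [one_rpow, mul_one, mul_one] at h
  linarith

lemma rpow_neg_two_div_three_le {t : ℝ} (ht : 0 < t) :
    t ^ (-(2 : ℝ) / 3) ≤ ((t ^ 2)⁻¹ + 2) / 3 := by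
  have h : t ^ (-(2 : ℝ) / 3) = ((t ^ 2)⁻¹) ^ (1 / 3 : ℝ) := by
    rw [← rpow_natCast, ← rpow_neg_one, ← rpow_mul ht.le, ← rpow_mul ht.le]
    norm_num
  rw [h]
  exact rpow_one_div_three_le (by positivity)

lemma hasDerivAt_sqrt_sq_sub_one {t : ℝ} (ht : 1 < t) :
    HasDerivAt (fun x ↦ √(x ^ 2 - 1)) (t / √(t ^ 2 - 1)) t := by
  have hs2 : t ^ 2 - 1 ≠ 0 := by nlinarith
  convert ((hasDerivAt_pow 2 t).sub_const 1).sqrt hs2 using 1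
  norm_num
  ring

lemma hasDerivAt_sub_arcosh {t : ℝ} (ht : 1 < t) :
    HasDerivAt (fun x ↦ √(x ^ 2 - 1) * (x ^ 2 + 2) / (3 * x) - arcosh x)
      (2 * (t ^ 2 - 1) ^ 2 / (3 * t ^ 2 * √(t ^ 2 - 1))) t := by
  have ht0 : t ≠ 0 := by positivity
  have hs : 0 < √(t ^ 2 - 1) := sqrt_pos.2 (by nlinarith)
  have hss : √(t ^ 2 - 1) ^ 2 = t ^ 2 - 1 := sq_sqrt (by nlinarith)
  refine ((((hasDerivAt_sqrt_sq_sub_one ht).mul ((hasDerivAt_pow 2 t).add_const 2)).div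
    ((hasDerivAt_id t).const_mul 3) (by positivity)).sub (hasDerivAt_arcosh ht)).congr_deriv ?_
  simp only [id, Pi.mul_apply, Nat.cast_ofNat]
  field_simp
  linear_combination (t ^ 2 - 2) * hss

lemma arcosh_lt {t : ℝ} (ht : 1 < t) : arcosh t < √(t ^ 2 - 1) * (t ^ 2 + 2) / (3 * t) := by
  have hmono : StrictMonoOn (fun x ↦ √(x ^ 2 - 1) * (x ^ 2 + 2) / (3 * x) - arcosh x) (Ici 1) := by
    refine strictMonoOn_of_hasDerivWithinAt_pos (convex_Ici 1) ?_
      (fun x hx ↦ (hasDerivAt_sub_arcosh (interior_Ici.subset hx)).hasDerivWithinAt) ?_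
    · refine ContinuousOn.sub ?_ continuousOn_arcosh
      exact ContinuousOn.div (by fun_prop) (by fun_prop) fun x (hx : 1 ≤ x) ↦ by linarith
    · rw [interior_Ici]
      intro x (hx : 1 < x)
      have hx2 : 0 < x ^ 2 - 1 := by nlinarith
      have := sqrt_pos.2 hx2
      have : 0 < x := zero_lt_one.trans hx
      exact div_pos (mul_pos two_pos (pow_pos hx2 2)) (by positivity)
  have h := hmono self_mem_Ici ht.le ht
  norm_num [arcosh_zero] at h
  linarith

lemma arcosh_div_lt {t : ℝ} (ht : 1 < t) :
    arcosh t / (t * √(t ^ 2 - 1)) < (1 + 2 * (t ^ 2)⁻¹) / 3 := by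
  have ht0 : 0 < t := zero_lt_one.trans ht
  have hs : 0 < √(t ^ 2 - 1) := sqrt_pos.2 (by nlinarith)
  calc arcosh t / (t * √(t ^ 2 - 1))
      < √(t ^ 2 - 1) * (t ^ 2 + 2) / (3 * t) / (t * √(t ^ 2 - 1)) := by
        gcongr
        exact arcosh_lt ht
    _ = (1 + 2 * (t ^ 2)⁻¹) / 3 := by
        field_simp

theorem stmt_5 (t : ℝ) (ht : 1 < t) :
    1 + (t ^ 2)⁻¹ - arccosh t / (t * Real.sqrt (t ^ 2 - 1)) - t ^ (-(2 : ℝ) / 3) > 0 := by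
  have h₁ := arcosh_div_lt ht
  have h₂ := rpow_neg_two_div_three_le (zero_lt_one.trans ht)
  rw [arccosh_eq_arcosh]
  linarith
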